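/- arXiv:2406.00564 — 2 statements merged into one kernel-verified Lean document; each statement's English description precedes it below -/
import Mathlib

section
/- Let A : ℝ^m → 2^{ℝ^m} be a maximal monotone operator with a ∈ interior(D(A)). Then there exist constants M₁ > 0 and M₂, M₃ ≥ 0 such that for every continuous X : [0,T] → closure(D(A)) and continuous bounded-variation K : [0,T] → ℝ^m with K₀ = 0 satisfying ⟨X_t − x, dK_t − y dt⟩ ≥ 0 for all (x,y) ∈ Gr(A), and all 0 ≤ s < t ≤ T: ∫_s^t ⟨X_r − a, dK_r⟩ ≥ M₁ |K|_s^t − M₂ ∫_s^t |X_r − a| dr − M₃ (t − s), where |K|_s^t denotes the total variation of K on [s,t]. -/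
/-!
A monotone operator is bounded near an interior point `a` of its domain: `‖y‖ ≤ M` whenever
`y ∈ A x` and `‖x - a‖ ≤ ρ`. On a subinterval `(u, v]`, testing the pair condition at
`x = a + ρ w / ‖w‖` with `w = ∫_(u,v] dK` gives
`ρ ‖w‖ ≤ ∫_(u,v] ⟪X - a, dK⟫ + M ∫_u^v (‖X - a‖ + ρ) dr`. Both sides are additive in the
interval, and over fine partitions the sums of `‖w‖` approach the total variation, so the
estimate holds with `M₁ = ρ`, `M₂ = M`, `M₃ = M ρ`.
-/

open MeasureTheory Set Metric Finset
open scoped RealInnerProductSpace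

section MonotoneOperator

variable {E : Type*} [NormedAddCommGroup E] [InnerProductSpace ℝ E]

def IsMonotoneOperator (A : E → Set E) : Prop :=
  ∀ x₁ x₂ y₁ y₂, y₁ ∈ A x₁ → y₂ ∈ A x₂ → 0 ≤ ⟪x₁ - x₂, y₁ - y₂⟫

theorem exists_finite_sphere_forall_half_lt_inner [ProperSpace E] :
    ∃ S ⊆ sphere (0 : E) 1, S.Finite ∧ ∀ u ∈ sphere (0 : E) 1, ∃ w ∈ S, 1 / 2 < ⟪w, u⟫ := by
  obtain ⟨S, hS, hfin, hcover⟩ := (isCompact_sphere (0 : E) 1).elim_finite_subcover_image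
    (c := fun w => {u | 1 / 2 < ⟪w, u⟫})
    (fun w _ => isOpen_lt continuous_const (continuous_const.inner continuous_id))
    (fun u hu => mem_biUnion hu (by
      rw [mem_sphere_zero_iff_norm] at hu
      norm_num [hu]))
  exact ⟨S, hS, hfin, fun u hu => by simpa using hcover hu⟩

/-- Testing monotonicity against finitely many points `a + r w` whose directions `w` see every
unit vector at an angle less than `π / 3`. -/
theorem IsMonotoneOperator.exists_bound_of_closedBall_subset [ProperSpace E] {A : E → Set E}
    (hA : IsMonotoneOperator A) {a : E} {r : ℝ} (hr : 0 < r)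
    (hD : closedBall a r ⊆ {x | (A x).Nonempty}) :
    ∃ M ≥ 0, ∀ x ∈ closedBall a (r / 4), ∀ y ∈ A x, ‖y‖ ≤ M := by
  obtain ⟨S, hS, hfin, hcover⟩ := exists_finite_sphere_forall_half_lt_inner (E := E)
  have hp : ∀ w ∈ S, a + r • w ∈ closedBall a r := fun w hw => by
    simp [norm_smul, abs_of_pos hr, mem_sphere_zero_iff_norm.1 (hS hw)]
  choose! z hz using fun w hw => hD (hp w hw)
  obtain ⟨C, hC⟩ := (hfin.image fun w => ‖z w‖).bddAbove
  refine ⟨5 * max C 0, by positivity, fun x hx y hy => ?_⟩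
  rcases eq_or_ne y 0 with rfl | hy0
  · simp only [norm_zero]; positivity
  have hy0' : 0 < ‖y‖ := norm_pos_iff.2 hy0
  obtain ⟨w, hwS, hw⟩ := hcover (‖y‖⁻¹ • y) (by simp [norm_smul, hy0'.ne'])
  rw [real_inner_smul_right, ← div_eq_inv_mul, lt_div_iff₀ hy0'] at hw
  have hxa : ‖x - a‖ ≤ r / 4 := mem_closedBall_iff_norm.1 hx
  have hzw : ‖z w‖ ≤ max C 0 := (hC (mem_image_of_mem _ hwS)).trans (le_max_left _ _)
  have hpx : ‖a + r • w - x‖ ≤ r + r / 4 := by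
    calc ‖a + r • w - x‖ ≤ ‖r • w‖ + ‖x - a‖ := by
          rw [show a + r • w - x = r • w - (x - a) by abel]; exact norm_sub_le _ _
      _ ≤ r + r / 4 := by
          rw [norm_smul, Real.norm_of_nonneg hr.le, mem_sphere_zero_iff_norm.1 (hS hwS)]; linarith
  have hmono : ⟪a + r • w - x, y⟫ ≤ ⟪a + r • w - x, z w⟫ := by
    have := hA _ _ _ _ (hz w hwS) hy
    rw [inner_sub_right] at this; linarith
  have hlower : r / 4 * ‖y‖ ≤ ⟪a + r • w - x, y⟫ := by
    have hax : -(r / 4 * ‖y‖) ≤ ⟪a - x, y⟫ := by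
      have := neg_abs_le ⟪a - x, y⟫
      have := abs_real_inner_le_norm (a - x) y
      rw [norm_sub_rev] at this
      nlinarith
    rw [show a + r • w - x = (a - x) + r • w by abel, inner_add_left, real_inner_smul_left]
    nlinarith
  have hupper : ⟪a + r • w - x, z w⟫ ≤ (r + r / 4) * max C 0 :=
    (real_inner_le_norm _ _).trans (mul_le_mul hpx hzw (norm_nonneg _) (by positivity))
  nlinarith

end MonotoneOperator

section Variation

variable {E : Type*} [NormedAddCommGroup E] [NormedSpace ℝ E]

theorem sum_setIntegral_Ioc_of_monotone {μ : Measure ℝ} {f : ℝ → E} {g : ℕ → ℝ}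
    (hg : Monotone g) (N : ℕ) (hf : IntegrableOn f (Ioc (g 0) (g N)) μ) :
    ∑ i ∈ range N, ∫ r in Ioc (g i) (g (i + 1)), f r ∂μ = ∫ r in Ioc (g 0) (g N), f r ∂μ := by
  induction N with
  | zero => simp
  | succ n ih =>
    have hsub : Ioc (g 0) (g n) ⊆ Ioc (g 0) (g (n + 1)) := Ioc_subset_Ioc le_rfl (hg n.le_succ)
    rw [sum_range_succ, ih (hf.mono_set hsub),
      ← setIntegral_union (Ioc_disjoint_Ioc_of_le le_rfl) measurableSet_Ioc (hf.mono_set hsub)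
        (hf.mono_set (Ioc_subset_Ioc (hg n.zero_le) le_rfl)),
      Ioc_union_Ioc_eq_Ioc (hg n.zero_le) (hg n.le_succ)]

theorem integral_norm_le_norm_integral_add {α : Type*} [MeasurableSpace α] {ν : Measure α}
    [IsFiniteMeasure ν] [CompleteSpace E] {k : α → E} (hk : Integrable k ν) (w : E) :
    ∫ r, ‖k r‖ ∂ν ≤ ‖∫ r, k r ∂ν‖ + 2 * ∫ r, ‖k r - w‖ ∂ν := by
  have hkw : Integrable (fun r => ‖k r - w‖) ν := (hk.sub (integrable_const w)).norm
  have h1 : ∫ r, ‖k r‖ ∂ν ≤ ∫ r, ‖k r - w‖ ∂ν + ν.real univ * ‖w‖ := by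
    rw [← smul_eq_mul, ← integral_const, ← integral_add hkw (integrable_const _)]
    exact integral_mono hk.norm (hkw.add (integrable_const _)) fun r => norm_le_norm_sub_add _ w
  have h2 : ν.real univ * ‖w‖ ≤ ‖∫ r, k r ∂ν‖ + ∫ r, ‖k r - w‖ ∂ν := by
    calc ν.real univ * ‖w‖ = ‖∫ r, k r ∂ν - ∫ r, (k r - w) ∂ν‖ := by
          rw [integral_sub hk (integrable_const w), sub_sub_cancel, integral_const, norm_smul,
            Real.norm_of_nonneg measureReal_nonneg]
      _ ≤ ‖∫ r, k r ∂ν‖ + ∫ r, ‖k r - w‖ ∂ν :=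
          (norm_sub_le _ _).trans (add_le_add_right (norm_integral_le_integral_norm _) _)
  linarith

theorem exists_partition_sub_lt {s t δ : ℝ} (hst : s ≤ t) (hδ : 0 < δ) :
    ∃ (N : ℕ) (g : ℕ → ℝ), Monotone g ∧ g 0 = s ∧ g N = t ∧ ∀ i, g (i + 1) - g i < δ := by
  obtain ⟨N, hN⟩ := exists_nat_gt ((t - s) / δ)
  have hN0 : (0 : ℝ) < N := (div_nonneg (sub_nonneg.2 hst) hδ.le).trans_lt hN
  refine ⟨N, fun i => s + i * ((t - s) / N), fun i j hij => ?_, by simp, ?_, fun i => ?_⟩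
  · have : (i : ℝ) ≤ j := by exact_mod_cast hij
    have : 0 ≤ (t - s) / N := div_nonneg (sub_nonneg.2 hst) hN0.le
    simp only; nlinarith
  · simp only; field_simp; ring
  · rw [div_lt_iff₀ hδ] at hN
    simp only [Nat.cast_succ]
    rw [show s + (i + 1) * ((t - s) / N) - (s + i * ((t - s) / N)) = (t - s) / N by ring,
      div_lt_iff₀ hN0]
    linarith

/-- On short intervals a compactly supported continuous approximation of `k` is nearly
constant, so `integral_norm_le_norm_integral_add` applies piecewise. -/
theorem exists_partition_setIntegral_norm_le [CompleteSpace E] {μ : Measure ℝ} [IsFiniteMeasure μ]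
    {k : ℝ → E} (hk : Integrable k μ) {s t ε : ℝ} (hst : s ≤ t) (hε : 0 < ε) :
    ∃ (N : ℕ) (g : ℕ → ℝ), Monotone g ∧ g 0 = s ∧ g N = t ∧
      ∫ r in Ioc s t, ‖k r‖ ∂μ ≤ ∑ i ∈ range N, ‖∫ r in Ioc (g i) (g (i + 1)), k r ∂μ‖ + ε := by
  obtain ⟨c, hc, hkc, hcont, hcint⟩ :=
    hk.exists_hasCompactSupport_integral_sub_le (ε := ε / 4) (by positivity)
  set η := ε / 4 / (μ.real univ + 1)
  have hη : 0 < η := by positivity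
  obtain ⟨δ, hδ, hcδ⟩ :=
    Metric.uniformContinuous_iff.1 (hc.uniformContinuous_of_continuous hcont) η hη
  obtain ⟨N, g, hg, rfl, rfl, hmesh⟩ := exists_partition_sub_lt hst hδ
  refine ⟨N, g, hg, rfl, rfl, ?_⟩
  set f : ℝ → ℝ := fun r => ‖k r - c r‖ + η
  have hkc' : Integrable (fun r => ‖k r - c r‖) μ := (hk.sub hcint).norm
  have hf : Integrable f μ := hkc'.add (integrable_const η)
  have hpiece : ∀ i, ∫ r in Ioc (g i) (g (i + 1)), ‖k r‖ ∂μ ≤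
      ‖∫ r in Ioc (g i) (g (i + 1)), k r ∂μ‖ + 2 * ∫ r in Ioc (g i) (g (i + 1)), f r ∂μ := by
    intro i
    have hw := integral_norm_le_norm_integral_add
      (hk.integrableOn (s := Ioc (g i) (g (i + 1)))) (c (g i))
    suffices ∫ r in Ioc (g i) (g (i + 1)), ‖k r - c (g i)‖ ∂μ ≤
        ∫ r in Ioc (g i) (g (i + 1)), f r ∂μ by linarith
    refine setIntegral_mono_on (hk.sub (integrable_const _)).norm.integrableOn hf.integrableOn
      measurableSet_Ioc fun r hr => ?_
    have hr' : dist (c r) (c (g i)) < η := hcδ <| by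
      rw [Real.dist_eq, abs_of_pos (sub_pos.2 hr.1)]; linarith [hr.2, hmesh i]
    rw [dist_eq_norm] at hr'
    calc ‖k r - c (g i)‖ ≤ ‖k r - c r‖ + ‖c r - c (g i)‖ := norm_sub_le_norm_sub_add_norm_sub _ _ _
      _ ≤ f r := by simp only [f]; linarith
  have hsum := sum_le_sum fun i (_ : i ∈ range N) => hpiece i
  rw [sum_add_distrib, ← mul_sum, sum_setIntegral_Ioc_of_monotone hg N hk.norm.integrableOn,
    sum_setIntegral_Ioc_of_monotone hg N hf.integrableOn] at hsum
  have hη' : η * μ.real univ ≤ ε / 4 := by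
    rw [div_mul_eq_mul_div, div_le_iff₀ (by positivity)]
    nlinarith [measureReal_nonneg (μ := μ) (s := univ)]
  have hfle : ∫ r in Ioc (g 0) (g N), f r ∂μ ≤ ε / 2 := by
    calc ∫ r in Ioc (g 0) (g N), f r ∂μ ≤ ∫ r, f r ∂μ :=
          setIntegral_le_integral hf (ae_of_all _ fun r => by positivity)
      _ = ∫ r, ‖k r - c r‖ ∂μ + η * μ.real univ := by
          rw [integral_add hkc' (integrable_const η), integral_const, smul_eq_mul,
            mul_comm]
      _ ≤ ε / 2 := by linarith
  linarith

theorem mul_setIntegral_norm_le_of_forall_Ioc [CompleteSpace E] {μ : Measure ℝ}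
    [IsFiniteMeasure μ] {k : ℝ → E} (hk : Integrable k μ) {s t c : ℝ} (hst : s ≤ t) (hc : 0 ≤ c)
    {F : ℝ → ℝ} (hF : ∀ u v, s ≤ u → u ≤ v → v ≤ t → c * ‖∫ r in Ioc u v, k r ∂μ‖ ≤ F v - F u) :
    c * ∫ r in Ioc s t, ‖k r‖ ∂μ ≤ F t - F s := by
  refine le_of_forall_pos_le_add fun ε hε => ?_
  obtain ⟨N, g, hg, rfl, rfl, happrox⟩ :=
    exists_partition_setIntegral_norm_le hk hst (ε := ε / (c + 1)) (by positivity)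
  have hsum : c * ∑ i ∈ range N, ‖∫ r in Ioc (g i) (g (i + 1)), k r ∂μ‖ ≤ F (g N) - F (g 0) := by
    rw [mul_sum, ← sum_range_sub (fun i => F (g i))]
    exact sum_le_sum fun i hi =>
      hF _ _ (hg i.zero_le) (hg i.le_succ) (hg (Nat.succ_le_of_lt (mem_range.1 hi)))
  have hcε : c * (ε / (c + 1)) ≤ ε := by
    rw [mul_div_assoc', div_le_iff₀ (by positivity)]; nlinarith
  nlinarith [mul_le_mul_of_nonneg_left happrox hc]

theorem mul_setIntegral_norm_le_of_forall_Ioc_le_add [CompleteSpace E] {μ : Measure ℝ}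
    [IsFiniteMeasure μ] {k : ℝ → E} (hk : Integrable k μ) {s t c : ℝ} (hst : s ≤ t) (hc : 0 ≤ c)
    {f h : ℝ → ℝ} (hf : IntegrableOn f (Ioc s t) μ) (hh : IntervalIntegrable h volume s t)
    (hkfh : ∀ u v, s ≤ u → u ≤ v → v ≤ t →
      c * ‖∫ r in Ioc u v, k r ∂μ‖ ≤ ∫ r in Ioc u v, f r ∂μ + ∫ r in u..v, h r) :
    c * ∫ r in Ioc s t, ‖k r‖ ∂μ ≤ ∫ r in Ioc s t, f r ∂μ + ∫ r in s..t, h r := by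
  have hf' : ∀ w, s ≤ w → w ≤ t → IntervalIntegrable f μ s w := fun w hsw hwt =>
    (intervalIntegrable_iff_integrableOn_Ioc_of_le hsw).2 (hf.mono_set (Ioc_subset_Ioc le_rfl hwt))
  have hh' : ∀ w, s ≤ w → w ≤ t → IntervalIntegrable h volume s w := fun w hsw hwt =>
    hh.mono_set (by rw [uIcc_of_le hsw, uIcc_of_le hst]; exact Icc_subset_Icc le_rfl hwt)
  have key := mul_setIntegral_norm_le_of_forall_Ioc hk hst hc
    (F := fun v => ∫ r in s..v, f r ∂μ + ∫ r in s..v, h r) fun u v hsu huv hvt => by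
      have hsv := hsu.trans huv
      have hut := huv.trans hvt
      rw [add_sub_add_comm,
        intervalIntegral.integral_interval_sub_left (hf' v hsv hvt) (hf' u hsu hut),
        intervalIntegral.integral_interval_sub_left (hh' v hsv hvt) (hh' u hsu hut),
        intervalIntegral.integral_of_le huv]
      exact hkfh u v hsu huv hvt
  simpa [intervalIntegral.integral_of_le hst] using key

end Variation

section Pair

variable {E : Type*} [NormedAddCommGroup E] [InnerProductSpace ℝ E]

theorem IntegrableOn.continuousOn_inner_of_subset {α : Type*} [TopologicalSpace α]
    [MeasurableSpace α] [OpensMeasurableSpace α] [SecondCountableTopologyEither α E]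
    {μ : Measure α} {f k : α → E} {s K : Set α} (hk : IntegrableOn k s μ) (hf : ContinuousOn f K)
    (hK : IsCompact K) (hs : MeasurableSet s) (hsK : s ⊆ K) :
    IntegrableOn (fun r => ⟪f r, k r⟫) s μ := by
  obtain ⟨C, hC⟩ := hK.exists_bound_of_continuousOn hf
  refine Integrable.mono' (hk.norm.const_mul C)
    (((hf.mono hsK).aestronglyMeasurable hs).inner hk.aestronglyMeasurable)
    (ae_restrict_of_forall_mem hs fun r hr => ?_)
  exact (norm_inner_le_norm _ _).trans
    (mul_le_mul_of_nonneg_right (hC r (hsK hr)) (norm_nonneg _))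

/-- Testing the pair condition at `x = a + ρ w / ‖w‖`, where `w = ∫ k dμ` over the interval. -/
theorem mul_norm_setIntegral_le_of_pair [CompleteSpace E] {A : E → Set E} {a : E} {ρ M : ℝ}
    (hρ : 0 ≤ ρ) (hD : closedBall a ρ ⊆ {x | (A x).Nonempty})
    (hM : ∀ x ∈ closedBall a ρ, ∀ y ∈ A x, ‖y‖ ≤ M) {μ : Measure ℝ} {X k : ℝ → E} {u v : ℝ}
    (huv : u ≤ v) (hX : ContinuousOn X (Icc u v)) (hk : IntegrableOn k (Ioc u v) μ)
    (hXk : IntegrableOn (fun r => ⟪X r - a, k r⟫) (Ioc u v) μ)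
    (hpair : ∀ x y, y ∈ A x → ∫ r in u..v, ⟪X r - x, y⟫ ≤ ∫ r in Ioc u v, ⟪X r - x, k r⟫ ∂μ) :
    ρ * ‖∫ r in Ioc u v, k r ∂μ‖ ≤
      ∫ r in Ioc u v, ⟪X r - a, k r⟫ ∂μ + ∫ r in u..v, M * (‖X r - a‖ + ρ) := by
  set w := ∫ r in Ioc u v, k r ∂μ
  set x := a + (ρ * ‖w‖⁻¹) • w
  have hxa : ‖x - a‖ ≤ ρ := by
    rcases eq_or_ne w 0 with hw | hw
    · simp [x, hw, hρ]
    · simp [x, norm_smul, abs_of_nonneg hρ, hw]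
  have hxw : ⟪x - a, w⟫ = ρ * ‖w‖ := by
    rcases eq_or_ne w 0 with hw | hw
    · simp [hw]
    · simp only [x, add_sub_cancel_left, real_inner_smul_left, real_inner_self_eq_norm_sq]
      field_simp
  have hx : x ∈ closedBall a ρ := mem_closedBall_iff_norm.2 hxa
  obtain ⟨y, hy⟩ := hD hx
  have hyM := hM x hx y hy
  have hlow : -∫ r in u..v, M * (‖X r - a‖ + ρ) ≤ ∫ r in u..v, ⟪X r - x, y⟫ := by
    refine neg_le_of_abs_le (intervalIntegral.norm_integral_le_of_norm_le huv
      (f := fun r => ⟪X r - x, y⟫) (μ := volume) (g := fun r => M * (‖X r - a‖ + ρ))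
      (ae_of_all _ fun r _ => ?_)
      (ContinuousOn.intervalIntegrable_of_Icc huv
        (continuousOn_const.mul ((hX.sub continuousOn_const).norm.add continuousOn_const))))
    have hXx : ‖X r - x‖ ≤ ‖X r - a‖ + ρ := by
      rw [show X r - x = (X r - a) - (x - a) by abel]
      exact (norm_sub_le _ _).trans (add_le_add_right hxa _)
    calc ‖⟪X r - x, y⟫‖ ≤ ‖X r - x‖ * ‖y‖ := norm_inner_le_norm _ _
      _ ≤ (‖X r - a‖ + ρ) * M := mul_le_mul hXx hyM (norm_nonneg _) (by positivity)
      _ = M * (‖X r - a‖ + ρ) := mul_comm _ _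
  have hsplit : ∫ r in Ioc u v, ⟪X r - x, k r⟫ ∂μ =
      ∫ r in Ioc u v, ⟪X r - a, k r⟫ ∂μ - ρ * ‖w‖ := by
    have hsub : ∀ r, ⟪X r - x, k r⟫ = ⟪X r - a, k r⟫ - ⟪x - a, k r⟫ := fun r => by
      rw [← inner_sub_left, sub_sub_sub_cancel_right]
    simp only [hsub]
    rw [integral_sub hXk (hk.const_inner _), integral_inner hk, hxw]
  linarith [hpair x y hy]

end Pair

/-- The Stieltjes measure `dK` is represented as `dK_r = k(r) dμ(r)` with `‖k‖ = 1` μ-a.e.,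
so the total variation `|K|_s^t` is `μ((s,t])`. -/
theorem stmt_10_general {m : ℕ}
    (A : EuclideanSpace ℝ (Fin m) → Set (EuclideanSpace ℝ (Fin m)))
    (hmono : ∀ x₁ x₂ y₁ y₂ : EuclideanSpace ℝ (Fin m),
      y₁ ∈ A x₁ → y₂ ∈ A x₂ → 0 ≤ ⟪x₁ - x₂, y₁ - y₂⟫)
    (a : EuclideanSpace ℝ (Fin m)) (ha : a ∈ interior {x | (A x).Nonempty})
    (T : ℝ) :
    ∃ M₁ > (0:ℝ), ∃ M₂ ≥ (0:ℝ), ∃ M₃ ≥ (0:ℝ),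
      ∀ (X : ℝ → EuclideanSpace ℝ (Fin m)) (μ : Measure ℝ) [IsFiniteMeasure μ]
        (k : ℝ → EuclideanSpace ℝ (Fin m)),
        ContinuousOn X (Set.Icc 0 T) →
        (∀ t ∈ Set.Icc (0:ℝ) T, X t ∈ closure {x | (A x).Nonempty}) →
        Integrable k μ →
        (∀ᵐ r ∂μ, ‖k r‖ = 1) →
        (∀ x y : EuclideanSpace ℝ (Fin m), y ∈ A x →
          ∀ s t : ℝ, 0 ≤ s → s ≤ t → t ≤ T →
            ∫ r in s..t, (⟪X r - x, y⟫ : ℝ) ≤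
              ∫ r in Set.Ioc s t, (⟪X r - x, k r⟫ : ℝ) ∂μ) →
        ∀ s t : ℝ, 0 ≤ s → s < t → t ≤ T →
          M₁ * (μ (Set.Ioc s t)).toReal - M₂ * (∫ r in s..t, ‖X r - a‖) - M₃ * (t - s) ≤
            ∫ r in Set.Ioc s t, (⟪X r - a, k r⟫ : ℝ) ∂μ := by
  obtain ⟨ε, hε, hball⟩ := Metric.mem_nhds_iff.mp (mem_interior_iff_mem_nhds.mp ha)
  have hD : closedBall a (ε / 2) ⊆ {x | (A x).Nonempty} :=
    (closedBall_subset_ball (half_lt_self hε)).trans hball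
  obtain ⟨M, hM0, hM⟩ := IsMonotoneOperator.exists_bound_of_closedBall_subset (A := A) hmono
    (half_pos hε) hD
  have hDρ : closedBall a (ε / 2 / 4) ⊆ {x | (A x).Nonempty} :=
    (closedBall_subset_closedBall (by linarith)).trans hD
  set ρ := ε / 2 / 4
  have hρ : 0 < ρ := by positivity
  refine ⟨ρ, hρ, M, hM0, M * ρ, by positivity, ?_⟩
  intro X μ _ k hX _ hk hk1 hpair s t hs hst htT
  have hXst : ContinuousOn X (Icc s t) := hX.mono (Icc_subset_Icc hs htT)
  have hXa : ContinuousOn (fun r => ‖X r - a‖) (Icc s t) := (hXst.sub continuousOn_const).norm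
  have hXk : IntegrableOn (fun r => ⟪X r - a, k r⟫) (Ioc s t) μ :=
    IntegrableOn.continuousOn_inner_of_subset hk.integrableOn (hXst.sub continuousOn_const)
      isCompact_Icc measurableSet_Ioc Ioc_subset_Icc_self
  have hTV := mul_setIntegral_norm_le_of_forall_Ioc_le_add hk hst.le hρ.le hXk
    (h := fun r => M * (‖X r - a‖ + ρ))
    ((continuousOn_const.mul (hXa.add continuousOn_const)).intervalIntegrable_of_Icc hst.le)
    fun u v hsu huv hvt => mul_norm_setIntegral_le_of_pair hρ.le hDρ hM huv
      (hXst.mono (Icc_subset_Icc hsu hvt)) hk.integrableOn (hXk.mono_set (Ioc_subset_Ioc hsu hvt))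
      (fun x y hy => hpair x y hy u v (hs.trans hsu) huv (hvt.trans htT))
  have hnorm : ∫ r in Ioc s t, ‖k r‖ ∂μ = (μ (Ioc s t)).toReal := by
    rw [setIntegral_congr_ae measurableSet_Ioc (hk1.mono fun r hr _ => hr), setIntegral_const,
      smul_eq_mul, mul_one, measureReal_def]
  rw [hnorm, intervalIntegral.integral_const_mul, intervalIntegral.integral_add
    (hXa.intervalIntegrable_of_Icc hst.le) intervalIntegrable_const,
    intervalIntegral.integral_const, smul_eq_mul] at hTV
  linarith

/-- Lemma 2.4 (interior estimate for maximal monotone operators): if `a ∈ Int(D(A))`, there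
are constants `M₁ > 0`, `M₂, M₃ ≥ 0` such that for every pair `(X, K)` associated to `A`
one has `∫_s^t ⟨X_r − a, dK_r⟩ ≥ M₁|K|_s^t − M₂∫_s^t |X_r − a| dr − M₃(t − s)`.
The Stieltjes measure `dK` is represented as `dK_r = k(r) dμ(r)` with `‖k‖ = 1` μ-a.e.,
so the total variation `|K|_s^t` is `μ((s,t])`. -/
theorem stmt_10 {m : ℕ}
    (A : EuclideanSpace ℝ (Fin m) → Set (EuclideanSpace ℝ (Fin m)))
    (hmono : ∀ x₁ x₂ y₁ y₂ : EuclideanSpace ℝ (Fin m),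
      y₁ ∈ A x₁ → y₂ ∈ A x₂ → 0 ≤ ⟪x₁ - x₂, y₁ - y₂⟫)
    (hmax : ∀ x₁ y₁ : EuclideanSpace ℝ (Fin m),
      (∀ x₂ y₂ : EuclideanSpace ℝ (Fin m), y₂ ∈ A x₂ → 0 ≤ ⟪x₁ - x₂, y₁ - y₂⟫) →
      y₁ ∈ A x₁)
    (a : EuclideanSpace ℝ (Fin m)) (ha : a ∈ interior {x | (A x).Nonempty})
    (T : ℝ) (hT : 0 < T) :
    ∃ M₁ > (0:ℝ), ∃ M₂ ≥ (0:ℝ), ∃ M₃ ≥ (0:ℝ),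
      ∀ (X : ℝ → EuclideanSpace ℝ (Fin m)) (μ : Measure ℝ) [IsFiniteMeasure μ]
        (k : ℝ → EuclideanSpace ℝ (Fin m)),
        ContinuousOn X (Set.Icc 0 T) →
        (∀ t ∈ Set.Icc (0:ℝ) T, X t ∈ closure {x | (A x).Nonempty}) →
        Integrable k μ →
        (∀ᵐ r ∂μ, ‖k r‖ = 1) →
        (∀ x y : EuclideanSpace ℝ (Fin m), y ∈ A x →
          ∀ s t : ℝ, 0 ≤ s → s ≤ t → t ≤ T →
            ∫ r in s..t, (⟪X r - x, y⟫ : ℝ) ≤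
              ∫ r in Set.Ioc s t, (⟪X r - x, k r⟫ : ℝ) ∂μ) →
        ∀ s t : ℝ, 0 ≤ s → s < t → t ≤ T →
          M₁ * (μ (Set.Ioc s t)).toReal - M₂ * (∫ r in s..t, ‖X r - a‖) - M₃ * (t - s) ≤
            ∫ r in Set.Ioc s t, (⟪X r - a, k r⟫ : ℝ) ∂μ :=
  stmt_10_general A hmono a ha T
end

section
/- Let α : [0,∞) → [0,∞) be measurable, and suppose α(s₁) ≤ α(s₂) + 2λ ∫_{s₁}^{s₂} α(r) dr for all 0 ≤ s₁ < s₂ < ∞, where λ > 0, and suppose e^{2λs}α(s) is dominated by an integrable bound and α(s) = 0 for all s ≥ S for some S > 0. Then α(s) = 0 for all s ≥ 0. -/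
/-!
Since `α` vanishes from `S` on, the hypothesis gives `α s ≤ 2λ ∫_s^S α` on `[0, S]`.
Iterating this Volterra inequality from the bound `α ≤ C` yields
`α s ≤ C (2λ(S - s))ⁿ / n!` for every `n`, and the right-hand side tends to `0`.
-/

open MeasureTheory Set
open scoped Nat

theorem integral_mul_sub_pow (c b s : ℝ) (n : ℕ) :
    ∫ r in s..b, (c * (b - r)) ^ n = c ^ n * ((b - s) ^ (n + 1) / (n + 1)) := by
  simp_rw [mul_pow]
  rw [intervalIntegral.integral_const_mul,
    intervalIntegral.integral_comp_sub_left (fun x => x ^ n), integral_pow]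
  simp

section VolterraInequality

variable {f : ℝ → ℝ} {a b c C : ℝ}

theorem le_mul_pow_div_factorial_of_le_mul_integral (hc : 0 ≤ c)
    (hf : IntervalIntegrable f volume a b) (hC : ∀ s ∈ Icc a b, f s ≤ C)
    (h : ∀ s ∈ Icc a b, f s ≤ c * ∫ r in s..b, f r) (n : ℕ) :
    ∀ s ∈ Icc a b, f s ≤ C * (c * (b - s)) ^ n / n ! := by
  induction n with
  | zero => simpa using hC
  | succ n ih =>
    intro s hs
    have hfs : IntervalIntegrable f volume s b :=
      hf.mono_set (uIcc_subset_uIcc_right (mem_uIcc_of_le hs.1 hs.2))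
    have hmajorant : IntervalIntegrable (fun r => C * (c * (b - r)) ^ n / n !) volume s b :=
      Continuous.intervalIntegrable (by fun_prop) _ _
    calc f s ≤ c * ∫ r in s..b, f r := h s hs
      _ ≤ c * ∫ r in s..b, C * (c * (b - r)) ^ n / n ! := by
          gcongr
          exact intervalIntegral.integral_mono_on hs.2 hfs hmajorant
            fun r hr => ih r ⟨hs.1.trans hr.1, hr.2⟩
      _ = C * (c * (b - s)) ^ (n + 1) / (n + 1)! := by
          rw [intervalIntegral.integral_div, intervalIntegral.integral_const_mul,
            integral_mul_sub_pow, Nat.factorial_succ, mul_pow, pow_succ]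
          push_cast
          field_simp
          ring

theorem nonpos_of_le_mul_integral (hc : 0 ≤ c)
    (hf : IntervalIntegrable f volume a b) (hC : ∀ s ∈ Icc a b, f s ≤ C)
    (h : ∀ s ∈ Icc a b, f s ≤ c * ∫ r in s..b, f r) :
    ∀ s ∈ Icc a b, f s ≤ 0 := fun s hs =>
  ge_of_tendsto' (by
      simpa [mul_div_assoc] using
        (FloorSemiring.tendsto_pow_div_factorial_atTop (c * (b - s))).const_mul C)
    fun n => le_mul_pow_div_factorial_of_le_mul_integral hc hf hC h n s hs

end VolterraInequality

/-- The backward Gronwall-type argument from the proof of Theorem 3.5: if a nonnegative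
measurable `α` satisfies `α(s₁) ≤ α(s₂) + 2λ∫_{s₁}^{s₂} α`, `e^{2λs}α(s)` is bounded, and
`α` vanishes beyond some `S`, then `α ≡ 0` on `[0,∞)`. -/
theorem stmt_16 (α : ℝ → ℝ) (lam : ℝ) (hlam : 0 < lam)
    (hmeas : Measurable α)
    (hnonneg : ∀ s ≥ (0:ℝ), 0 ≤ α s)
    (hineq : ∀ s₁ s₂ : ℝ, 0 ≤ s₁ → s₁ < s₂ →
      α s₁ ≤ α s₂ + 2 * lam * ∫ r in s₁..s₂, α r)
    (hdom : ∃ Cb : ℝ, ∀ s ≥ (0:ℝ), Real.exp (2 * lam * s) * α s ≤ Cb)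
    (hvanish : ∃ S > (0:ℝ), ∀ s ≥ S, α s = 0) :
    ∀ s ≥ (0:ℝ), α s = 0 := by
  obtain ⟨Cb, hCb⟩ := hdom
  obtain ⟨S, hS, hvan⟩ := hvanish
  have hbound : ∀ s ∈ Icc 0 S, α s ≤ Cb := fun s hs =>
    (le_mul_of_one_le_left (hnonneg s hs.1) (Real.one_le_exp (by nlinarith [hs.1]))).trans
      (hCb s hs.1)
  have hint : IntervalIntegrable α volume 0 S :=
    (intervalIntegrable_iff_integrableOn_Icc_of_le hS.le).2 <|
      Measure.integrableOn_of_bounded (M := Cb) measure_Icc_lt_top.ne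
        hmeas.aestronglyMeasurable <|
          ae_restrict_of_forall_mem measurableSet_Icc fun s hs => by
            rw [Real.norm_of_nonneg (hnonneg s hs.1)]
            exact hbound s hs
  have hvolterra : ∀ s ∈ Icc 0 S, α s ≤ 2 * lam * ∫ r in s..S, α r := by
    rintro s ⟨hs0, hsS⟩
    rcases hsS.eq_or_lt with rfl | hsS
    · simp [hvan s le_rfl]
    · simpa [hvan S le_rfl] using hineq s S hs0 hsS
  intro s hs
  rcases le_or_gt S s with hSs | hsS
  · exact hvan s hSs
  · exact le_antisymm
      (nonpos_of_le_mul_integral (by positivity) hint hbound hvolterra s ⟨hs, hsS.le⟩)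
      (hnonneg s hs)
end
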